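/- arXiv:0904.3902 — 2 statements merged into one kernel-verified Lean document; each statement's English description precedes it below -/
import Mathlib

section
/- Let 1 → S₃ → G' → G → 1 be a short exact sequence of groups with G finite, and let α, β be commuting elements of G. Then the number of pairs (a,b) ∈ G' × G' with q(a) = α, q(b) = β, and ab = ba is 18. -/
/-!
The kernel `K ≅ S₃` is a complete group: its centre is trivial and all its automorphisms are
inner. So every coset of `K` contains an element centralizing `K` (correct `g` by the element of
`K` inducing the same automorphism), and two such lifts `a, b` of commuting `α, β` commute, since
`⁅a, b⁆` lies in `K` and centralizes it. Translation by `(a, b)` then matches the commuting lifts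
of `(α, β)` with the commuting pairs of `S₃`, of which there are `|S₃| · #classes = 6 · 3 = 18`.
-/

open Function Subgroup
open scoped commutatorElement

/-- Trivial centre and only inner automorphisms. -/
def IsCompleteGroup (H : Type*) [Group H] : Prop :=
  Bijective (MulAut.conj : H →* MulAut H)

namespace IsCompleteGroup

variable {H K : Type*} [Group H] [Group K]

theorem eq_one_of_forall_commute (hH : IsCompleteGroup H) {z : H} (hz : ∀ x, Commute z x) :
    z = 1 :=
  hH.1 <| by ext x; simp [(hz x).eq]

theorem of_mulEquiv (e : H ≃* K) (hH : IsCompleteGroup H) : IsCompleteGroup K := by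
  have h : (MulAut.conj : K →* MulAut K) = MulAut.congr e ∘ MulAut.conj ∘ e.symm := by
    funext k; ext x; simp
  rw [IsCompleteGroup, h]
  exact (MulAut.congr e).bijective.comp (hH.comp e.symm.bijective)

end IsCompleteGroup

section CompleteNormalSubgroup

variable {G : Type*} [Group G] {N : Subgroup G}

/-- Conjugation by `g` restricts to an automorphism of `N`, which is conjugation by some `k ∈ N`;
then `g * k⁻¹` centralizes `N`. -/
theorem exists_mul_mem_centralizer [N.Normal] (hN : IsCompleteGroup N) (g : G) :
    ∃ n ∈ N, g * n ∈ centralizer N := by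
  obtain ⟨k, hk⟩ := hN.2 (MulAut.conjNormal g)
  refine ⟨(k : G)⁻¹, N.inv_mem k.2, mem_centralizer_iff.2 fun h hh => ?_⟩
  have hconj : h = g * ((k : G)⁻¹ * h * k) * g⁻¹ := by
    simpa [mul_assoc] using congrArg Subtype.val
      (DFunLike.congr_fun hk ⟨(k : G)⁻¹ * h * k, N.mul_mem (N.mul_mem (N.inv_mem k.2) hh) k.2⟩)
  conv_lhs => rw [hconj]
  group

theorem commute_of_mem_centralizer (hN : IsCompleteGroup N) {a b : G}
    (ha : a ∈ centralizer N) (hb : b ∈ centralizer N) (hab : ⁅a, b⁆ ∈ N) : Commute a b := by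
  have hc : ⁅a, b⁆ ∈ centralizer N := by
    rw [commutatorElement_def]
    exact mul_mem (mul_mem (mul_mem ha hb) (inv_mem ha)) (inv_mem hb)
  have hone : (⟨⁅a, b⁆, hab⟩ : N) = 1 :=
    hN.eq_one_of_forall_commute fun x => Subtype.ext (mem_centralizer_iff.1 hc x x.2).symm
  exact commutatorElement_eq_one_iff_commute.1 (congrArg Subtype.val hone)

end CompleteNormalSubgroup

theorem commute_mul_mul_iff {G : Type*} [Group G] {a b x y : G} (hab : Commute a b)
    (hay : Commute a y) (hxb : Commute x b) : Commute (a * x) (b * y) ↔ Commute x y := by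
  refine ⟨fun h => ?_, fun h => (hab.mul_right hay).mul_left (hxb.mul_right h)⟩
  simpa using (hab.inv_inv.mul_right (hab.mul_right hay).inv_left).mul_left
    ((hab.mul_left hxb).inv_right.mul_right h)

theorem card_commute_congr {H K : Type*} [Group H] [Group K] (e : H ≃* K) :
    Nat.card {p : H × H // Commute p.1 p.2} = Nat.card {p : K × K // Commute p.1 p.2} :=
  Nat.card_congr <| (e.toEquiv.prodCongr e.toEquiv).subtypeEquiv fun p =>
    ⟨fun h => h.map e, fun h => by simpa using h.map e.symm⟩

section Extension

variable {G' G : Type*} [Group G'] [Group G] {q : G' →* G}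

theorem exists_commuting_lifts_mem_centralizer (hq : Surjective q)
    (hK : IsCompleteGroup q.ker) {α β : G} (hαβ : Commute α β) :
    ∃ a b : G', q a = α ∧ q b = β ∧ a ∈ centralizer q.ker ∧ b ∈ centralizer q.ker ∧
      Commute a b := by
  have lift : ∀ γ, ∃ c ∈ centralizer q.ker, q c = γ := fun γ => by
    obtain ⟨g, rfl⟩ := hq γ
    obtain ⟨n, hn, hc⟩ := exists_mul_mem_centralizer hK g
    exact ⟨g * n, hc, by simpa using hn⟩
  obtain ⟨a, ha, rfl⟩ := lift α
  obtain ⟨b, hb, rfl⟩ := lift β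
  refine ⟨a, b, rfl, rfl, ha, hb, commute_of_mem_centralizer hK ha hb ?_⟩
  rwa [MonoidHom.mem_ker, map_commutatorElement, commutatorElement_eq_one_iff_commute]

theorem card_commuting_lifts_eq {a b : G'} (ha : a ∈ centralizer q.ker)
    (hb : b ∈ centralizer q.ker) (hab : Commute a b) :
    Nat.card {p : G' × G' // q p.1 = q a ∧ q p.2 = q b ∧ Commute p.1 p.2} =
      Nat.card {p : q.ker × q.ker // Commute p.1 p.2} := by
  have hay (y : q.ker) : Commute a y := (mem_centralizer_iff.1 ha y y.2).symm
  have hxb (x : q.ker) : Commute (x : G') b := mem_centralizer_iff.1 hb x x.2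
  symm
  refine Nat.card_congr
    { toFun := fun p => ⟨(a * p.1.1, b * p.1.2), by simp [MonoidHom.mem_ker.1 p.1.1.2],
        by simp [MonoidHom.mem_ker.1 p.1.2.2],
        (commute_mul_mul_iff hab (hay _) (hxb _)).2 (congrArg Subtype.val p.2)⟩
      invFun := fun p => ⟨(⟨a⁻¹ * p.1.1, by simp [p.2.1]⟩, ⟨b⁻¹ * p.1.2, by simp [p.2.2.1]⟩),
        Subtype.ext <| (commute_mul_mul_iff hab (hay _) (hxb _)).1 (by simpa using p.2.2.2)⟩
      left_inv := fun p => by ext <;> simp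
      right_inv := fun p => by ext <;> simp }

end Extension

namespace Equiv.Perm

theorem exists_conj_of_presentation_fin_three : ∀ a b : Perm (Fin 3),
    a * a = 1 ∧ b ≠ 1 ∧ b * b * b = 1 ∧ a * b * a = b⁻¹ →
      ∃ k : Perm (Fin 3), a = k * swap 0 1 * k⁻¹ ∧ b = k * finRotate 3 * k⁻¹ := by
  decide

theorem isCompleteGroup_fin_three : IsCompleteGroup (Perm (Fin 3)) := by
  refine ⟨(injective_iff_map_eq_one _).2 fun z hz => ?_, fun φ => ?_⟩
  · have hcentral : ∀ z : Perm (Fin 3), (∀ x, z * x * z⁻¹ = x) → z = 1 := by decide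
    exact hcentral z fun x => by simpa using DFunLike.congr_fun hz x
  · -- `swap 0 1` and `finRotate 3` generate, and their images satisfy the same relations
    obtain ⟨k, hs, hr⟩ := exists_conj_of_presentation_fin_three (φ (swap 0 1)) (φ (finRotate 3))
      ⟨by rw [← map_mul, ← map_one φ]; exact congrArg φ (by decide),
        (map_ne_one_iff φ φ.injective).2 (by decide),
        by rw [← map_mul, ← map_mul, ← map_one φ]; exact congrArg φ (by decide),
        by rw [← map_inv, ← map_mul, ← map_mul]; exact congrArg φ (by decide)⟩
    refine ⟨k, MulEquiv.toMonoidHom_injective <| MonoidHom.eq_of_eqOn_dense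
      (closure_cycle_adjacent_swap isCycle_finRotate support_finRotate 0) ?_⟩
    rintro x (rfl | rfl) <;> simp [hs, hr]

theorem card_commute_fin_three :
    Nat.card {p : Perm (Fin 3) × Perm (Fin 3) // Commute p.1 p.2} = 18 := by
  change Nat.card {p : Perm (Fin 3) × Perm (Fin 3) // p.1 * p.2 = p.2 * p.1} = 18
  rw [Nat.card_eq_fintype_card]
  decide

end Equiv.Perm

theorem stmt_9_general (G' G : Type*) [Group G'] [Group G]
    (q : G' →* G) (hq : Function.Surjective q)
    (hker : Nonempty (q.ker ≃* Equiv.Perm (Fin 3)))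
    (α β : G) (hαβ : α * β = β * α) :
    Nat.card {p : G' × G' // q p.1 = α ∧ q p.2 = β ∧ p.1 * p.2 = p.2 * p.1} = 18 := by
  obtain ⟨e⟩ := hker
  have hK : IsCompleteGroup q.ker := Equiv.Perm.isCompleteGroup_fin_three.of_mulEquiv e.symm
  obtain ⟨a, b, rfl, rfl, ha, hb, hab⟩ := exists_commuting_lifts_mem_centralizer hq hK hαβ
  exact (card_commuting_lifts_eq ha hb hab).trans <|
    (card_commute_congr e).trans Equiv.Perm.card_commute_fin_three

theorem stmt_9 (G' G : Type*) [Group G'] [Group G] [Finite G]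
    (q : G' →* G) (hq : Function.Surjective q)
    (hker : Nonempty (q.ker ≃* Equiv.Perm (Fin 3)))
    (α β : G) (hαβ : α * β = β * α) :
    Nat.card {p : G' × G' // q p.1 = α ∧ q p.2 = β ∧ p.1 * p.2 = p.2 * p.1} = 18 :=
  stmt_9_general G' G q hq hker α β hαβ
end

section
/- Let q: G' → G be a surjective group homomorphism with kernel isomorphic to Q₈, and let α, β be commuting elements of G. Then |L(α, β, q)| ∈ {0, 8, 16, 24, 40}, where L(α, β, q) = {(a,b) ∈ G' × G' : q(a) = α, q(b) = β, ab = ba}. -/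
/-!
Fix lifts `a`, `b` of `α`, `β`. Every pair of lifts is `(u * a, v * b)` with `u v ∈ K = ker q`,
and it commutes iff `u * φ v * w = v * ψ u`, where `φ`, `ψ` are conjugation by `a`, `b`
restricted to `K` and `w = ⁅a, b⁆ ∈ K`; these satisfy `φ * ψ = conj w * (ψ * φ)`. Transported
to `Q₈`, the count depends only on `(φ, ψ, w)`, and since an endomorphism of `Q₈` is determined
by the images of its two generators, all possible counts are found by a finite enumeration.
-/

open scoped commutatorElement

section TwistedCommPairs

variable {N N' : Type*} [Group N] [Group N']

def twistedCommPairs (φ ψ : MulAut N) (w : N) : Set (N × N) :=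
  {p | p.1 * φ p.2 * w = p.2 * ψ p.1}

theorem nat_card_twistedCommPairs_congr (e : N ≃* N') (φ ψ : MulAut N) (w : N) :
    Nat.card (twistedCommPairs (MulAut.congr e φ) (MulAut.congr e ψ) (e w)) =
      Nat.card (twistedCommPairs φ ψ w) := by
  refine (Nat.card_congr ((e.toEquiv.prodCongr e.toEquiv).subtypeEquiv fun p => ?_)).symm
  simp [twistedCommPairs, ← map_mul, e.injective.eq_iff]

theorem MulAut.congr_conj (e : N ≃* N') (w : N) :
    MulAut.congr e (MulAut.conj w) = MulAut.conj (e w) := by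
  ext; simp

end TwistedCommPairs

section CommutingLifts

variable {G' G : Type*} [Group G'] [Group G]

theorem MulAut.conjNormal_mul_conjNormal {H : Subgroup G'} [H.Normal] (a b : G') (w : H)
    (hw : (w : G') = ⁅a, b⁆) :
    MulAut.conjNormal a * MulAut.conjNormal b =
      MulAut.conj w * (MulAut.conjNormal b * MulAut.conjNormal a) := by
  rw [← MulAut.conjNormal_val, hw, ← map_mul, ← map_mul, ← map_mul, commutatorElement_def]
  group

theorem commute_iff_twisted (x y a b : G') :
    x * y = y * x ↔
      x * a⁻¹ * (a * (y * b⁻¹) * a⁻¹) * ⁅a, b⁆ = y * b⁻¹ * (b * (x * a⁻¹) * b⁻¹) := by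
  rw [show x * a⁻¹ * (a * (y * b⁻¹) * a⁻¹) * ⁅a, b⁆ = x * y * (a⁻¹ * b⁻¹) by
      rw [commutatorElement_def]; group,
    show y * b⁻¹ * (b * (x * a⁻¹) * b⁻¹) = y * x * (a⁻¹ * b⁻¹) by group, mul_left_inj]

theorem nat_card_commuting_lifts (q : G' →* G) (a b : G') (w : q.ker) (hw : (w : G') = ⁅a, b⁆) :
    Nat.card {p : G' × G' // q p.1 = q a ∧ q p.2 = q b ∧ p.1 * p.2 = p.2 * p.1} =
      Nat.card (twistedCommPairs (MulAut.conjNormal a) (MulAut.conjNormal b) w) := by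
  refine Nat.card_congr
    { toFun := fun p => ⟨(⟨p.1.1 * a⁻¹, ?_⟩, ⟨p.1.2 * b⁻¹, ?_⟩), ?_⟩
      invFun := fun p => ⟨(p.1.1 * a, p.1.2 * b), ?_⟩
      left_inv := fun p => by ext <;> simp
      right_inv := fun p => by ext <;> simp }
  · simp [p.2.1]
  · simp [p.2.2.1]
  · ext
    simpa [twistedCommPairs, MulAut.conjNormal_apply, hw] using
      (commute_iff_twisted _ _ a b).mp p.2.2.2
  · refine ⟨by simp [MonoidHom.mem_ker.mp p.1.1.2], by simp [MonoidHom.mem_ker.mp p.1.2.2],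
      (commute_iff_twisted _ _ a b).mpr ?_⟩
    simpa [twistedCommPairs, Subtype.ext_iff, MulAut.conjNormal_apply, hw] using p.2

end CommutingLifts

namespace QuaternionGroup

variable {n : ℕ} {M : Type*} [Monoid M]

/-- The candidate map sending the generators `a 1`, `xa 0` to `A`, `B`, using
`a i = a 1 ^ i` and `xa i = a (-i) * xa 0`. -/
def ofGens (A B : M) : QuaternionGroup n → M
  | .a i => A ^ i.val
  | .xa i => A ^ (-i).val * B

theorem eq_ofGens [NeZero n] (f : QuaternionGroup n →* M) (x : QuaternionGroup n) :
    f x = ofGens (f (a 1)) (f (xa 0)) x := by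
  have a_eq_pow (i : ZMod (2 * n)) : (a i : QuaternionGroup n) = a 1 ^ i.val := by
    rw [a_one_pow, ZMod.natCast_zmod_val]
  cases x with
  | a i =>
    change f (a i) = f (a 1) ^ i.val
    rw [← map_pow, ← a_eq_pow]
  | xa i =>
    change f (xa i) = f (a 1) ^ (-i).val * f (xa 0)
    rw [← map_pow, ← a_eq_pow, ← map_mul, a_mul_xa, zero_sub, neg_neg]

theorem card_filter_twisted_mem_of_gens : ∀ A B : QuaternionGroup 2,
    (∀ x y : QuaternionGroup 2, ofGens A B (x * y) = ofGens A B x * ofGens A B y) →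
    ∀ A' B' : QuaternionGroup 2,
    (∀ x y : QuaternionGroup 2, ofGens A' B' (x * y) = ofGens A' B' x * ofGens A' B' y) →
    ∀ w : QuaternionGroup 2,
    (∀ k : QuaternionGroup 2,
      ofGens A B (ofGens A' B' k) = w * ofGens A' B' (ofGens A B k) * w⁻¹) →
    (Finset.univ.filter fun p : QuaternionGroup 2 × QuaternionGroup 2 =>
      p.1 * ofGens A B p.2 * w = p.2 * ofGens A' B' p.1).card ∈
      ({0, 8, 16, 24, 40} : Finset ℕ) := by
  decide +kernel

theorem nat_card_twistedCommPairs_mem (φ ψ : MulAut (QuaternionGroup 2)) (w : QuaternionGroup 2)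
    (h : φ * ψ = MulAut.conj w * (ψ * φ)) :
    Nat.card (twistedCommPairs φ ψ w) ∈ ({0, 8, 16, 24, 40} : Set ℕ) := by
  have hφ := eq_ofGens φ.toMonoidHom
  have hψ := eq_ofGens ψ.toMonoidHom
  simp only [MulEquiv.coe_toMonoidHom] at hφ hψ
  have key := card_filter_twisted_mem_of_gens (φ (a 1)) (φ (xa 0))
    (fun x y => by simp only [← hφ, map_mul]) (ψ (a 1)) (ψ (xa 0))
    (fun x y => by simp only [← hψ, map_mul]) w
    (fun k => by simp only [← hφ, ← hψ]; exact congr($h k))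
  simp only [← hφ, ← hψ] at key
  have hcard : Nat.card (twistedCommPairs φ ψ w) =
      (Finset.univ.filter fun p : QuaternionGroup 2 × QuaternionGroup 2 =>
        p.1 * φ p.2 * w = p.2 * ψ p.1).card := by
    rw [← Fintype.card_subtype, ← Nat.card_eq_fintype_card]; rfl
  rw [hcard]
  simpa using key

end QuaternionGroup

theorem stmt_10 (G' G : Type*) [Group G'] [Group G]
    (q : G' →* G) (hq : Function.Surjective q)
    (hker : Nonempty (q.ker ≃* QuaternionGroup 2))
    (α β : G) (hαβ : α * β = β * α) :
    Nat.card {p : G' × G' // q p.1 = α ∧ q p.2 = β ∧ p.1 * p.2 = p.2 * p.1} ∈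
      ({0, 8, 16, 24, 40} : Set ℕ) := by
  obtain ⟨e⟩ := hker
  obtain ⟨a, rfl⟩ := hq α
  obtain ⟨b, rfl⟩ := hq β
  have hw : ⁅a, b⁆ ∈ q.ker := by simp [MonoidHom.mem_ker, commutatorElement_def, hαβ]
  rw [nat_card_commuting_lifts q a b ⟨_, hw⟩ rfl, ← nat_card_twistedCommPairs_congr e]
  apply QuaternionGroup.nat_card_twistedCommPairs_mem
  simpa only [map_mul, MulAut.congr_conj] using
    congr(MulAut.congr e $(MulAut.conjNormal_mul_conjNormal a b ⟨_, hw⟩ rfl))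
end
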